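/- arXiv:2605.02268 — 5 statements merged into one kernel-verified Lean document; each statement's English description precedes it below -/
import Mathlib

section
/- In the shift-orientation of the shift graph G(n,k), for any directed path u^(1) → u^(2) → ... → u^(j) with j ≥ 3, there is no edge (in either direction) between u^(1) and u^(j). In particular, the shift-orientation is semi-transitive. -/
/-- A strictly increasing `k`-tuple with entries in `{1,...,n}`. -/
def IncrTuple (n k : ℕ) (x : Fin k → ℕ) : Prop :=
  StrictMono x ∧ ∀ i, 1 ≤ x i ∧ x i ≤ n

/-- The shift condition: `x` shifted left equals `y` on its first `k-1` entries,
i.e. `x (i+1) = y i` for all consecutive indices (1-based: `x_{i+1} = y_i` for `1 ≤ i ≤ k-1`). -/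
def ShiftArc (k : ℕ) (x y : Fin k → ℕ) : Prop :=
  ∀ i j : Fin k, (i : ℕ) + 1 = (j : ℕ) → x j = y i

/-- Adjacency in the shift graph `G(n,k)`. -/
def ShiftAdj (k : ℕ) (x y : Fin k → ℕ) : Prop :=
  x ≠ y ∧ (ShiftArc k x y ∨ ShiftArc k y x)

abbrev ShiftVertex (n k : ℕ) := {x : Fin k → ℕ // IncrTuple n k x}

/-- The shift graph `G(n,k)`. -/
def ShiftGraph (n k : ℕ) : SimpleGraph (ShiftVertex n k) where
  Adj u v := ShiftAdj k u.1 v.1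
  symm := ⟨fun u v h => ⟨Ne.symm h.1, h.2.symm⟩⟩
  loopless := ⟨fun u h => h.1 rfl⟩

/-- `O` is a semi-transitive orientation of `G`: every arc is an edge, every edge gets
exactly one direction, the orientation is acyclic, and for every directed path
`u 0 → u 1 → ⋯ → u t` (with `t ≥ 1` arcs) either the endpoints are non-adjacent or
the path vertices carry all forward arcs (transitive tournament). -/
def IsSemiTransitiveOrientation {V : Type*} (G : SimpleGraph V) (O : V → V → Prop) : Prop :=
  (∀ u v, O u v → G.Adj u v) ∧
  (∀ u v, G.Adj u v → (O u v ↔ ¬ O v u)) ∧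
  (∀ v, ¬ Relation.TransGen O v v) ∧
  (∀ (t : ℕ) (u : ℕ → V), 1 ≤ t → (∀ i < t, O (u i) (u (i + 1))) →
    (¬ G.Adj (u 0) (u t)) ∨ (∀ i j, i < j → j ≤ t → O (u i) (u j)))

theorem stmt3 (n k : ℕ) (hk : 2 ≤ k) (hn : k < n) :
    (∀ (t : ℕ) (u : ℕ → ShiftVertex n k), 2 ≤ t →
      (∀ i < t, ShiftArc k (u i).1 (u (i + 1)).1) →
      ¬ (ShiftGraph n k).Adj (u 0) (u t)) ∧
    IsSemiTransitiveOrientation (ShiftGraph n k)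
      (fun u v => ShiftArc k u.1 v.1) := by
  -- step lemma: each arc strictly increases every entry
  have step : ∀ x y : ShiftVertex n k, ShiftArc k x.1 y.1 →
      ∀ i : Fin k, x.1 i + 1 ≤ y.1 i := by
    intro x y h i
    have hik := i.isLt
    by_cases hlt : (i : ℕ) + 1 < k
    · have harc := h i ⟨(i : ℕ) + 1, hlt⟩ rfl
      have hx : x.1 i < x.1 ⟨(i : ℕ) + 1, hlt⟩ := x.2.1 (by simp [Fin.lt_def])
      omega
    · have h1 : 1 ≤ (i : ℕ) := by omega
      have hprev : (i : ℕ) - 1 < k := by omega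
      have harc := h ⟨(i : ℕ) - 1, hprev⟩ i (by simp; omega)
      have hy : y.1 ⟨(i : ℕ) - 1, hprev⟩ < y.1 i := y.2.1 (by simp [Fin.lt_def]; omega)
      omega
  -- path lemma
  have path : ∀ (t : ℕ) (u : ℕ → ShiftVertex n k),
      (∀ s < t, ShiftArc k (u s).1 (u (s + 1)).1) →
      ∀ i : Fin k, (u 0).1 i + t ≤ (u t).1 i := by
    intro t
    induction t with
    | zero => intro u _ i; simp
    | succ t ih =>
      intro u h i
      have h1 := ih u (fun s hs => h s (by omega)) i
      have h2 := step (u t) (u (t + 1)) (h t (by omega)) i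
      omega
  have h0k : 0 < k := by omega
  have h1k : 1 < k := by omega
  -- the main "no edge back" fact
  have main : ∀ (t : ℕ) (u : ℕ → ShiftVertex n k), 2 ≤ t →
      (∀ i < t, ShiftArc k (u i).1 (u (i + 1)).1) →
      ¬ (ShiftGraph n k).Adj (u 0) (u t) := by
    intro t u ht h hadj
    obtain ⟨hne, hor⟩ := hadj
    rcases hor with harc | harc
    · -- ShiftArc (u 0) (u t): (u 0).1 1 = (u t).1 0
      have e1 : (u 0).1 ⟨1, h1k⟩ = (u t).1 ⟨0, h0k⟩ := harc ⟨0, h0k⟩ ⟨1, h1k⟩ rfl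
      have e2 : (u 0).1 ⟨1, h1k⟩ = (u 1).1 ⟨0, h0k⟩ :=
        h 0 (by omega) ⟨0, h0k⟩ ⟨1, h1k⟩ rfl
      -- path from 1 to t
      have hp := path (t - 1) (fun r => u (1 + r))
        (fun s hs => by
          have := h (1 + s) (by omega)
          simpa [Nat.add_assoc] using this) ⟨0, h0k⟩
      simp only [Nat.add_zero] at hp
      have htt : 1 + (t - 1) = t := by omega
      rw [htt] at hp
      omega
    · -- ShiftArc (u t) (u 0): (u t).1 1 = (u 0).1 0
      have e1 : (u t).1 ⟨1, h1k⟩ = (u 0).1 ⟨0, h0k⟩ := harc ⟨0, h0k⟩ ⟨1, h1k⟩ rfl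
      have hp := path t u h ⟨1, h1k⟩
      have hmono : (u 0).1 ⟨0, h0k⟩ < (u 0).1 ⟨1, h1k⟩ :=
        (u 0).2.1 (by simp [Fin.lt_def])
      omega
  refine ⟨main, ?_, ?_, ?_, ?_⟩
  · -- arcs are edges
    intro u v h
    refine ⟨fun he => ?_, Or.inl h⟩
    have := step u v h ⟨0, h0k⟩
    rw [he] at this
    omega
  · -- exactly one direction
    intro u v hadj
    constructor
    · intro h1 h2
      have := step u v h1 ⟨0, h0k⟩
      have := step v u h2 ⟨0, h0k⟩
      omega
    · intro h2
      rcases hadj.2 with h | h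
      · exact h
      · exact absurd h h2
  · -- acyclic
    intro v hcyc
    have key : ∀ a b : ShiftVertex n k,
        Relation.TransGen (fun u v => ShiftArc k u.1 v.1) a b →
        a.1 ⟨0, h0k⟩ < b.1 ⟨0, h0k⟩ := by
      intro a b h
      induction h with
      | single h => have := step _ _ h ⟨0, h0k⟩; omega
      | tail _ h ih => have := step _ _ h ⟨0, h0k⟩; omega
    have := key v v hcyc
    omega
  · -- semi-transitivity
    intro t u ht h
    rcases Nat.lt_or_ge t 2 with ht2 | ht2
    · -- t = 1
      right
      intro i j hij hjt
      have : i = 0 ∧ j = 1 := by omega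
      obtain ⟨rfl, rfl⟩ := this
      have : t = 1 := by omega
      exact h 0 (by omega)
    · exact Or.inl (main t u ht2 h)
end

section
/- Every shift graph G(n,k) admits a semi-transitive orientation. -/
theorem stmt4 (n k : ℕ) (hk : 2 ≤ k) (hn : k < n) :
    ∃ O : ShiftVertex n k → ShiftVertex n k → Prop,
      IsSemiTransitiveOrientation (ShiftGraph n k) O := by
  have h0 : (0 : ℕ) < k := by omega
  have h1 : (1 : ℕ) < k := by omega
  set i0 : Fin k := ⟨0, h0⟩ with hi0
  set i1 : Fin k := ⟨1, h1⟩ with hi1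
  -- the orientation
  refine ⟨fun u v => u.1 ≠ v.1 ∧ ShiftArc k u.1 v.1, ?_, ?_, ?_, ?_⟩
  · -- arcs are edges
    exact fun u v h => ⟨h.1, Or.inl h.2⟩
  · -- exactly one direction per edge
    intro u v hadj
    have hnotboth : ¬ (ShiftArc k u.1 v.1 ∧ ShiftArc k v.1 u.1) := by
      rintro ⟨h1', h2'⟩
      have e1 : u.1 i1 = v.1 i0 := h1' i0 i1 rfl
      have e2 : v.1 i1 = u.1 i0 := h2' i0 i1 rfl
      have m1 : u.1 i0 < u.1 i1 := u.2.1 (by simp [hi0, hi1, Fin.lt_def])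
      have m2 : v.1 i0 < v.1 i1 := v.2.1 (by simp [hi0, hi1, Fin.lt_def])
      omega
    constructor
    · rintro ⟨hne, harc⟩ ⟨hne', harc'⟩
      exact hnotboth ⟨harc, harc'⟩
    · intro hnot
      rcases hadj.2 with h | h
      · exact ⟨hadj.1, h⟩
      · exact absurd ⟨fun e => hadj.1 e.symm, h⟩ hnot
  · -- acyclicity
    intro v hcyc
    have mono : ∀ a b : ShiftVertex n k, (a.1 ≠ b.1 ∧ ShiftArc k a.1 b.1) →
        a.1 i0 < b.1 i0 := by
      rintro a b ⟨_, harc⟩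
      have e1 : a.1 i1 = b.1 i0 := harc i0 i1 rfl
      have m1 : a.1 i0 < a.1 i1 := a.2.1 (by simp [hi0, hi1, Fin.lt_def])
      omega
    have key : ∀ a b : ShiftVertex n k,
        Relation.TransGen (fun u v => u.1 ≠ v.1 ∧ ShiftArc k u.1 v.1) a b →
        a.1 i0 < b.1 i0 := by
      intro a b h
      induction h with
      | single h => exact mono _ _ h
      | tail _ h ih => exact ih.trans (mono _ _ h)
    exact lt_irrefl _ (key v v hcyc)
  · -- semi-transitivity
    intro t u ht hpath
    rcases eq_or_lt_of_le ht with ht1 | ht2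
    · -- t = 1 : the path is a single arc
      right
      intro i j hij hjt
      have : i = 0 ∧ j = 1 := by omega
      obtain ⟨rfl, rfl⟩ := this
      exact hpath 0 (by omega)
    · -- t ≥ 2 : endpoints are non-adjacent
      left
      -- coordinates along the path
      have estep : ∀ j, j < t → (u j).1 i1 = (u (j+1)).1 i0 :=
        fun j hj => (hpath j hj).2 i0 i1 rfl
      have mstep : ∀ j, (u j).1 i0 < (u j).1 i1 :=
        fun j => (u j).2.1 (by simp [hi0, hi1, Fin.lt_def])
      -- first coordinate strictly increases
      have fmono : ∀ a b, a < b → b ≤ t → (u a).1 i0 < (u b).1 i0 := by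
        intro a b hab hbt
        induction b with
        | zero => omega
        | succ b ih =>
          have hstep : (u b).1 i0 < (u (b+1)).1 i0 := by
            have := estep b (by omega)
            have := mstep b
            omega
          rcases Nat.lt_succ_iff_lt_or_eq.mp hab with h | h
          · exact (ih h (by omega)).trans hstep
          · subst h; exact hstep
      -- second coordinate strictly increases
      have gmono : ∀ a b, a < b → b ≤ t → (u a).1 i1 < (u b).1 i1 := by
        intro a b hab hbt
        induction b with
        | zero => omega
        | succ b ih =>
          have hstep : (u b).1 i1 < (u (b+1)).1 i1 := by
            have := estep b (by omega)
            have := mstep (b+1)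
            omega
          rcases Nat.lt_succ_iff_lt_or_eq.mp hab with h | h
          · exact (ih h (by omega)).trans hstep
          · subst h; exact hstep
      rintro ⟨hne, harc | harc⟩
      · -- ShiftArc (u 0) (u t) : (u 0) i1 = (u t) i0
        have e : (u 0).1 i1 = (u t).1 i0 := harc i0 i1 rfl
        have e2 : (u (t-1)).1 i1 = (u t).1 i0 := by
          have := estep (t-1) (by omega)
          have : t - 1 + 1 = t := by omega
          rw [← this]
          exact estep (t-1) (by omega)
        have : (u 0).1 i1 < (u (t-1)).1 i1 := gmono 0 (t-1) (by omega) (by omega)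
        omega
      · -- ShiftArc (u t) (u 0) : (u t) i1 = (u 0) i0
        have e : (u t).1 i1 = (u 0).1 i0 := harc i0 i1 rfl
        have hf : (u 0).1 i0 < (u t).1 i0 := fmono 0 t (by omega) le_rfl
        have := mstep t
        omega
end

section
/- In the m-shift orientation of G_m(n,k), for any directed path u^(1) → ... → u^(j) with j ≥ 3, the vertices u^(1) and u^(j) are not adjacent in G_m(n,k). Hence the m-shift orientation is semi-transitive. -/
/-- The `m`-shift condition: `x_{i+m} = y_i` for all `1 ≤ i ≤ k-m` (here 0-based). -/
def MShiftArc (m k : ℕ) (x y : Fin k → ℕ) : Prop :=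
  ∀ i j : Fin k, (i : ℕ) + m = (j : ℕ) → x j = y i

/-- Adjacency in the `m`-shift graph `G_m(n,k)`. -/
def MShiftAdj (m k : ℕ) (x y : Fin k → ℕ) : Prop :=
  x ≠ y ∧ (MShiftArc m k x y ∨ MShiftArc m k y x)

/-- The `m`-shift graph `G_m(n,k)`. -/
def MShiftGraph (n k m : ℕ) : SimpleGraph (ShiftVertex n k) where
  Adj u v := MShiftAdj m k u.1 v.1
  symm := ⟨fun u v h => ⟨Ne.symm h.1, h.2.symm⟩⟩
  loopless := ⟨fun u h => h.1 rfl⟩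

section Aux

variable {n k m : ℕ}

/-- Along an arc, `y 0 = x m`, hence `x 0 < y 0`. -/
lemma arc_first_eq (hmk : m < k) {x y : Fin k → ℕ}
    (h : MShiftArc m k x y) : y ⟨0, Nat.lt_of_le_of_lt (Nat.zero_le m) hmk⟩ = x ⟨m, hmk⟩ :=
  (h ⟨0, Nat.lt_of_le_of_lt (Nat.zero_le m) hmk⟩ ⟨m, hmk⟩ (by simp)).symm

lemma arc_lt (hm1 : 1 ≤ m) (hmk : m < k) {x y : Fin k → ℕ}
    (hx : StrictMono x) (h : MShiftArc m k x y) :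
    x ⟨0, Nat.lt_of_le_of_lt (Nat.zero_le m) hmk⟩ < y ⟨0, Nat.lt_of_le_of_lt (Nat.zero_le m) hmk⟩ := by
  rw [arc_first_eq hmk h]
  exact hx (by simpa using (by omega : 0 < m))

lemma transGen_lt (hm1 : 1 ≤ m) (hmk : m < k) {u v : ShiftVertex n k}
    (h : Relation.TransGen (fun u v : ShiftVertex n k => MShiftArc m k u.1 v.1) u v) :
    u.1 ⟨0, Nat.lt_of_le_of_lt (Nat.zero_le m) hmk⟩ < v.1 ⟨0, Nat.lt_of_le_of_lt (Nat.zero_le m) hmk⟩ := by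
  induction h with
  | @single b h => exact arc_lt hm1 hmk u.2.1 h
  | @tail b c hb h ih => exact lt_trans ih (arc_lt hm1 hmk b.2.1 h)

lemma chain_lt (hm1 : 1 ≤ m) (hmk : m < k) {t : ℕ} (u : ℕ → ShiftVertex n k)
    (hu : ∀ i < t, MShiftArc m k (u i).1 (u (i + 1)).1) {i j : ℕ} (hij : i < j) (hjt : j ≤ t) :
    (u i).1 ⟨0, Nat.lt_of_le_of_lt (Nat.zero_le m) hmk⟩ <
      (u j).1 ⟨0, Nat.lt_of_le_of_lt (Nat.zero_le m) hmk⟩ := by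
  induction j with
  | zero => omega
  | succ j ih =>
    rcases Nat.lt_or_ge i j with h | h
    · exact lt_trans (ih h (by omega)) (arc_lt hm1 hmk (u j).2.1 (hu j (by omega)))
    · have : i = j := by omega
      subst this
      exact arc_lt hm1 hmk (u i).2.1 (hu i (by omega))

end Aux

theorem stmt9 (n k m : ℕ) (hk : 2 ≤ k) (hn : k < n) (hm1 : 1 ≤ m) (hmk : m < k) :
    (∀ (t : ℕ) (u : ℕ → ShiftVertex n k), 2 ≤ t →
      (∀ i < t, MShiftArc m k (u i).1 (u (i + 1)).1) →
      ¬ (MShiftGraph n k m).Adj (u 0) (u t)) ∧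
    IsSemiTransitiveOrientation (MShiftGraph n k m)
      (fun u v => MShiftArc m k u.1 v.1) := by
  set i0 : Fin k := ⟨0, Nat.lt_of_le_of_lt (Nat.zero_le m) hmk⟩
  set im : Fin k := ⟨m, hmk⟩
  have key : ∀ (t : ℕ) (u : ℕ → ShiftVertex n k), 2 ≤ t →
      (∀ i < t, MShiftArc m k (u i).1 (u (i + 1)).1) →
      ¬ (MShiftGraph n k m).Adj (u 0) (u t) := by
    intro t u ht hu hadj
    rcases hadj.2 with h | h
    · -- arc u0 → ut : ut 0 = u0 m = u1 0, but u1 0 < ut 0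
      have h1 : (u t).1 i0 = (u 0).1 im := arc_first_eq hmk h
      have h2 : (u 1).1 i0 = (u 0).1 im := arc_first_eq hmk (hu 0 (by omega))
      have h3 : (u 1).1 i0 < (u t).1 i0 := chain_lt hm1 hmk u hu (show 1 < t by omega) le_rfl
      omega
    · -- arc ut → u0 : u0 0 = ut m > ut 0 > u0 0
      have h1 : (u 0).1 i0 = (u t).1 im := arc_first_eq hmk h
      have h2 : (u t).1 i0 < (u t).1 im := (u t).2.1 (show i0 < im by
        simp only [i0, im, Fin.mk_lt_mk]; omega)
      have h3 : (u 0).1 i0 < (u t).1 i0 := chain_lt hm1 hmk u hu (show 0 < t by omega) le_rfl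
      omega
  have arc_adj : ∀ u v : ShiftVertex n k, MShiftArc m k u.1 v.1 → (MShiftGraph n k m).Adj u v := by
    intro u v h
    refine ⟨fun he => ?_, Or.inl h⟩
    have := arc_lt hm1 hmk u.2.1 h
    rw [he] at this
    exact lt_irrefl _ this
  refine ⟨key, arc_adj, ?_, ?_, ?_⟩
  · intro u v hadj
    constructor
    · intro h h'
      have h1 := arc_lt hm1 hmk u.2.1 h
      have h2 := arc_lt hm1 hmk v.2.1 h'
      omega
    · intro h
      rcases hadj.2 with h' | h'
      · exact h'
      · exact absurd h' h
  · intro v hv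
    exact lt_irrefl _ (transGen_lt hm1 hmk hv)
  · intro t u ht hu
    rcases Nat.lt_or_ge t 2 with h | h
    · right
      intro i j hij hjt
      have : i = 0 ∧ j = 1 := by omega
      obtain ⟨rfl, rfl⟩ := this
      exact hu 0 (by omega)
    · exact Or.inl (key t u h hu)
end

section
/- Every m-shift graph G_m(n,k) admits a semi-transitive orientation. -/
theorem stmt10 (n k m : ℕ) (hk : 2 ≤ k) (hn : k < n) (hm1 : 1 ≤ m) (hmk : m < k) :
    ∃ O : ShiftVertex n k → ShiftVertex n k → Prop,
      IsSemiTransitiveOrientation (MShiftGraph n k m) O := by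
  set i0 : Fin k := ⟨0, by omega⟩ with hi0
  set im : Fin k := ⟨m, hmk⟩ with him
  have hi0im : i0 < im := by simp [Fin.lt_def, hi0, him]; omega
  -- arc direction forces increase of first coordinate
  have harc_lt : ∀ x y : ShiftVertex n k, MShiftArc m k x.1 y.1 → x.1 i0 < y.1 i0 := by
    intro x y h
    have h1 : x.1 im = y.1 i0 := h i0 im (by simp [hi0, him])
    have := x.2.1 hi0im
    omega
  set O : ShiftVertex n k → ShiftVertex n k → Prop :=
    fun x y => MShiftAdj m k x.1 y.1 ∧ x.1 i0 < y.1 i0 with hO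
  have hdir : ∀ x y : ShiftVertex n k, MShiftAdj m k x.1 y.1 → x.1 i0 < y.1 i0 →
      MShiftArc m k x.1 y.1 := by
    intro x y h hlt
    rcases h.2 with h' | h'
    · exact h'
    · exact absurd (harc_lt y x h') (by omega)
  have holt : ∀ x y : ShiftVertex n k, O x y → x.1 i0 < y.1 i0 := fun x y h => h.2
  refine ⟨O, ?_, ?_, ?_, ?_⟩
  · intro u v h; exact h.1
  · intro u v hadj
    have hne : u.1 i0 ≠ v.1 i0 := by
      rcases hadj.2 with h' | h'
      · exact ne_of_lt (harc_lt u v h')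
      · exact ne_of_gt (harc_lt v u h')
    constructor
    · rintro ⟨_, hlt⟩ ⟨_, hlt'⟩; omega
    · intro h
      refine ⟨hadj, ?_⟩
      rcases lt_or_gt_of_ne hne with h' | h'
      · exact h'
      · exact absurd ⟨⟨hadj.1.symm, hadj.2.symm⟩, h'⟩ h
  · intro v hv
    have key : ∀ a b : ShiftVertex n k, Relation.TransGen O a b → a.1 i0 < b.1 i0 := by
      intro a b h
      induction h with
      | single h => exact holt _ _ h
      | tail _ h ih => exact ih.trans (holt _ _ h)
    exact absurd (key v v hv) (lt_irrefl _)
  · intro t u ht harcs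
    -- monotonicity of first coordinate along the path
    have hmono : ∀ d a, 0 < d → a + d ≤ t → (u a).1 i0 < (u (a + d)).1 i0 := by
      intro d
      induction d with
      | zero => omega
      | succ d ih =>
        intro a _ hle
        have hstep : O (u (a + d)) (u (a + d + 1)) := harcs (a + d) (by omega)
        rcases Nat.eq_zero_or_pos d with hd | hd
        · subst hd; simpa using holt _ _ hstep
        · have := ih a hd (by omega)
          have := holt _ _ hstep
          have he : a + (d + 1) = a + d + 1 := by omega
          rw [he]; omega
    by_cases hadj : (MShiftGraph n k m).Adj (u 0) (u t)
    · right
      -- show t ≤ 2, since t ≥ 3 is impossible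
      have hadj' : MShiftAdj m k (u 0).1 (u t).1 := hadj
      have h0t : (u 0).1 i0 < (u t).1 i0 := by
        have := hmono t 0 (by omega) (by omega); simpa using this
      have arc0t : MShiftArc m k (u 0).1 (u t).1 := hdir _ _ hadj' h0t
      have ht2 : t ≤ 2 := by
        by_contra h3
        push_neg at h3
        have arcfirst : MShiftArc m k (u 0).1 (u 1).1 :=
          hdir _ _ (harcs 0 (by omega)).1 (holt _ _ (harcs 0 (by omega)))
        have hlast : O (u (t - 1)) (u t) := by
          have := harcs (t - 1) (by omega)
          rwa [show t - 1 + 1 = t from by omega] at this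
        have arclast : MShiftArc m k (u (t - 1)).1 (u t).1 :=
          hdir _ _ hlast.1 (holt _ _ hlast)
        have e1 : (u 0).1 im = (u t).1 i0 := arc0t i0 im (by simp [hi0, him])
        have e2 : (u (t - 1)).1 im = (u t).1 i0 := arclast i0 im (by simp [hi0, him])
        have e3 : (u 0).1 im = (u 1).1 i0 := arcfirst i0 im (by simp [hi0, him])
        have e4 : (u 1).1 i0 < (u (t - 1)).1 i0 := by
          have := hmono (t - 1 - 1) 1 (by omega) (by omega)
          rwa [show 1 + (t - 1 - 1) = t - 1 from by omega] at this
        have e5 : (u (t - 1)).1 i0 < (u (t - 1)).1 im := (u (t - 1)).2.1 hi0im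
        omega
      intro i j hij hjt
      interval_cases t
      · interval_cases j
        · omega
        · interval_cases i
          · exact harcs 0 (by omega)
      · interval_cases j
        · omega
        · interval_cases i
          · exact harcs 0 (by omega)
        · interval_cases i
          · exact ⟨hadj', by
              have := hmono 2 0 (by omega) (by omega); simpa using this⟩
          · exact harcs 1 (by omega)
    · left; exact hadj
end

section
/- The m-shift graph G_m(n,k) is triangle-free whenever k ≥ 2m: there do not exist three pairwise adjacent vertices. -/
theorem stmt18 (n k m : ℕ) (hk : 2 ≤ k) (hn : k < n) (hm1 : 1 ≤ m) (hmk : m < k)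
    (h2m : 2 * m ≤ k) :
    (MShiftGraph n k m).CliqueFree 3 := by
  have h0k : 0 < k := by omega
  have key : ∀ u v : ShiftVertex n k, MShiftArc m k u.1 v.1 →
      v.1 ⟨0, h0k⟩ = u.1 ⟨m, hmk⟩ ∧ u.1 ⟨0, h0k⟩ < u.1 ⟨m, hmk⟩ := by
    intro u v h
    refine ⟨(h ⟨0, h0k⟩ ⟨m, hmk⟩ (by simp)).symm, ?_⟩
    exact u.2.1 (Fin.mk_lt_mk.mpr (by omega))
  intro s hs
  rw [SimpleGraph.isNClique_iff, Finset.card_eq_three] at hs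
  obtain ⟨hcl, a, b, c, hab, hac, hbc, rfl⟩ := hs
  have Hab := hcl (by simp) (by simp : b ∈ (↑({a,b,c} : Finset _) : Set _)) hab
  have Hbc := hcl (by simp : b ∈ (↑({a,b,c} : Finset _) : Set _)) (by simp) hbc
  have Hac := hcl (by simp) (by simp : c ∈ (↑({a,b,c} : Finset _) : Set _)) hac
  rcases Hab.2 with h1 | h1 <;> rcases Hbc.2 with h2 | h2 <;> rcases Hac.2 with h3 | h3 <;>
    · have k1 := key _ _ h1
      have k2 := key _ _ h2
      have k3 := key _ _ h3
      omega
end
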